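/- Let Q_A, Q_B be orthogonal projections on a Hilbert space and let R = Q_A Q_B. Then ‖Rⁿ‖² = ‖(Q_A Q_B Q_A)^{2n−1}‖ = ‖Q_A Q_B‖^{2(2n−1)}, i.e., ‖(Q_A Q_B)ⁿ‖ = ‖Q_A Q_B‖^{2n−1}. -/

import Mathlib

noncomputable def proj {E : Type*} [NormedAddCommGroup E] [InnerProductSpace ℝ E]
    (K : Submodule ℝ E) [CompleteSpace K] : E →L[ℝ] E :=
  K.subtypeL.comp (K.orthogonalProjection)

section aux

lemma proj_idem {E : Type*} [NormedAddCommGroup E] [InnerProductSpace ℝ E]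
    (K : Submodule ℝ E) [CompleteSpace K] : proj K * proj K = proj K := by
  ext x
  simp [proj, ContinuousLinearMap.mul_apply, Submodule.orthogonalProjection_mem_subspace_eq_self,
    Submodule.starProjection_eq_self_iff]

lemma proj_sa {E : Type*} [NormedAddCommGroup E] [InnerProductSpace ℝ E] [CompleteSpace E]
    (K : Submodule ℝ E) [CompleteSpace K] : IsSelfAdjoint (proj K) :=
  isSelfAdjoint_starProjection K

lemma key_pqp {M : Type*} [Monoid M] (p q : M) (hp : p * p = p) (m : ℕ) :
    (p * q * p) ^ (m + 1) = (p * q) ^ (m + 1) * p := by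
  have hp' : ∀ x : M, p * (p * x) = p * x := fun x => by rw [← mul_assoc, hp]
  induction m with
  | zero => simp [pow_succ]
  | succ k ih =>
    rw [pow_succ, ih]
    simp only [pow_succ, mul_assoc, hp']

lemma key_qp {M : Type*} [Monoid M] (p q : M) (hq : q * q = q) (m : ℕ) :
    (q * p) ^ (m + 1) = q * (p * q) ^ m * p := by
  have hq' : ∀ x : M, q * (q * x) = q * x := fun x => by rw [← mul_assoc, hq]
  induction m with
  | zero => simp [pow_succ]
  | succ k ih =>
    rw [pow_succ, ih]
    simp only [pow_succ, mul_assoc, hq']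

lemma key_main {M : Type*} [Monoid M] (p q : M) (hp : p * p = p) (hq : q * q = q) (m : ℕ) :
    (p * q) ^ (m + 1) * (q * p) ^ (m + 1) = (p * q * p) ^ (2 * m + 1) := by
  rw [key_qp p q hq m, key_pqp p q hp (2 * m), pow_succ (p * q) m]
  have : p * q * q = p * q := by rw [mul_assoc, hq]
  calc (p * q) ^ m * (p * q) * (q * (p * q) ^ m * p)
      = (p * q) ^ m * (p * q * q) * (p * q) ^ m * p := by
        simp only [mul_assoc]
    _ = (p * q) ^ m * (p * q) * (p * q) ^ m * p := by rw [this]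
    _ = (p * q) ^ (2 * m + 1) * p := by
        rw [← pow_succ (p * q) m, ← pow_add]
        ring_nf

lemma sa_norm_pow {R : Type*} [NormedRing R] [StarRing R] [CStarRing R] {x : R}
    (hx : IsSelfAdjoint x) {n : ℕ} (hn : 1 ≤ n) : ‖x ^ n‖ = ‖x‖ ^ n := by
  by_cases h0 : ‖x‖ = 0
  · have hx0 : x = 0 := norm_eq_zero.mp h0
    simp [hx0, zero_pow (show n ≠ 0 by omega)]
  · have hpos : 0 < ‖x‖ := lt_of_le_of_ne (norm_nonneg x) (Ne.symm h0)
    refine le_antisymm (norm_pow_le' x (by omega)) ?_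
    -- choose k with n < 2 ^ k
    obtain ⟨k, hk⟩ : ∃ k, n < 2 ^ k := ⟨n, Nat.lt_two_pow_self⟩
    have h2 : ‖x ^ (2 ^ k)‖ = ‖x‖ ^ (2 ^ k) := by
      rw [← coe_nnnorm, hx.nnnorm_pow_two_pow k, NNReal.coe_pow, coe_nnnorm]
    have hsplit : x ^ (2 ^ k) = x ^ n * x ^ (2 ^ k - n) := by
      rw [← pow_add]; congr 1; omega
    have hle : ‖x‖ ^ (2 ^ k) ≤ ‖x ^ n‖ * ‖x‖ ^ (2 ^ k - n) := by
      calc ‖x‖ ^ (2 ^ k) = ‖x ^ (2 ^ k)‖ := h2.symm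
        _ ≤ ‖x ^ n‖ * ‖x ^ (2 ^ k - n)‖ := by rw [hsplit]; exact norm_mul_le _ _
        _ ≤ ‖x ^ n‖ * ‖x‖ ^ (2 ^ k - n) := by
            gcongr
            exact norm_pow_le' x (by omega)
    have hsplit' : ‖x‖ ^ (2 ^ k) = ‖x‖ ^ n * ‖x‖ ^ (2 ^ k - n) := by
      rw [← pow_add]; congr 1; omega
    rw [hsplit'] at hle
    exact le_of_mul_le_mul_right hle (pow_pos hpos _)

end aux

theorem stmt4 {E : Type*} [NormedAddCommGroup E] [InnerProductSpace ℝ E] [CompleteSpace E]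
    (A B : Submodule ℝ E) [CompleteSpace A] [CompleteSpace B]
    (n : ℕ) (hn : 1 ≤ n) :
    ‖(proj A ∘L proj B) ^ n‖ ^ 2 = ‖(proj A ∘L proj B ∘L proj A) ^ (2 * n - 1)‖ ∧
      ‖(proj A ∘L proj B) ^ n‖ ^ 2 = ‖proj A ∘L proj B‖ ^ (2 * (2 * n - 1)) ∧
      ‖(proj A ∘L proj B) ^ n‖ = ‖proj A ∘L proj B‖ ^ (2 * n - 1) := by
  obtain ⟨m, rfl⟩ : ∃ m, n = m + 1 := ⟨n - 1, by omega⟩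
  set p := proj A with hpdef
  set q := proj B with hqdef
  have hp : p * p = p := proj_idem A
  have hq : q * q = q := proj_idem B
  have hps : IsSelfAdjoint p := proj_sa A
  have hqs : IsSelfAdjoint q := proj_sa B
  have hcomp : (proj A ∘L proj B : E →L[ℝ] E) = p * q := rfl
  have hcomp3 : (proj A ∘L proj B ∘L proj A : E →L[ℝ] E) = p * q * p := by
    show p ∘L (q ∘L p) = p * q * p
    rw [mul_assoc]; rfl
  have hstar : star (p * q) = q * p := by
    rw [star_mul, hps.star_eq, hqs.star_eq]
  have hsa3 : IsSelfAdjoint (p * q * p) := by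
    rw [IsSelfAdjoint, star_mul, star_mul, hps.star_eq, hqs.star_eq, mul_assoc]
  have hexp : 2 * (m + 1) - 1 = 2 * m + 1 := by omega
  have h1 : ‖(p * q) ^ (m + 1)‖ ^ 2 = ‖(p * q * p) ^ (2 * m + 1)‖ := by
    rw [sq, ← CStarRing.norm_self_mul_star, ← key_main p q hp hq m]
    congr 1
    rw [star_pow, hstar]
  have hnorm3 : ‖p * q * p‖ = ‖p * q‖ ^ 2 := by
    rw [sq, ← CStarRing.norm_self_mul_star, hstar]
    congr 1
    rw [← mul_assoc (p * q) q p, mul_assoc p q q, hq]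
  have h2 : ‖(p * q * p) ^ (2 * m + 1)‖ = ‖p * q‖ ^ (2 * (2 * m + 1)) := by
    rw [sa_norm_pow hsa3 (by omega), hnorm3, ← pow_mul]
  refine ⟨?_, ?_, ?_⟩
  · rw [hcomp, hcomp3, hexp, h1]
  · rw [hcomp, hexp, h1, h2]
  · rw [hcomp, hexp]
    have hsq : ‖(p * q) ^ (m + 1)‖ ^ 2 = (‖p * q‖ ^ (2 * m + 1)) ^ 2 := by
      rw [h1, h2, pow_mul']
    exact (pow_left_inj₀ (norm_nonneg _) (by positivity) two_ne_zero).mp hsq
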